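/- arXiv:1506.05158 — 3 statements merged into one kernel-verified Lean document; each statement's English description precedes it below -/
import Mathlib

section
/- Suppose an empirical CDF F_N satisfies sup_x |F(x) − F_N(x)| ≤ ε with ε = (1−A)·(N/(N+2))·2^{−(q+1)} for some A ∈ [0,1], and suppose F_N(i/2^q) − F_N((i−1)/2^q) = (N/(N+2))·2^{−q} for each i = 1, …, 2^q (the balanced property). Then for each bucket i, the true probability mass F(i/2^q) − F((i−1)/2^q) ≥ A·(N/(N+2))·2^{−q}, and consequently the entropy of the distribution over the 2^q buckets is at least q·A·N/(N+2). -/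
open Finset

/-!
Comparing the two CDFs at the endpoints of a bucket, the balanced empirical mass
`r·2^{-q}`, `r = N/(N+2)`, can exceed the true mass by at most `2ε = (1 - A)·r·2^{-q}`,
so every true mass is at least `λ/n` with `λ = A·r` and `n = 2^q`. A distribution on `n`
points with all masses at least `λ/n` is a mixture `λ·uniform + (1 - λ)·s`, so by
concavity of `-x log x` its entropy is at least `λ` times that of the uniform
distribution, i.e. `λ·log n`.
-/

theorem sum_Icc_sub_natCast_sub_one {R M : Type*} [Ring R] [AddCommGroup M] (f : R → M)
    (n : ℕ) : ∑ i ∈ Icc 1 n, (f i - f (i - 1)) = f n - f 0 := by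
  induction n with
  | zero => simp
  | succ n ih =>
    rw [sum_Icc_succ_top (by omega), ih]
    push_cast
    rw [add_sub_cancel_right]
    abel

theorem le_sub_mul_of_forall_le_of_sum_eq {ι : Type*} {s : Finset ι} {p : ι → ℝ} {a c : ℝ}
    {i : ι} (hi : i ∈ s) (hp : ∀ j ∈ s, c ≤ p j) (hsum : ∑ j ∈ s, p j = a) :
    p i ≤ a - (#s - 1) * c := by
  classical
  have hrest := card_nsmul_le_sum (s.erase i) p c fun j hj => hp j (mem_of_mem_erase hj)
  rw [card_erase_of_mem hi, nsmul_eq_mul, Nat.cast_pred (card_pos.2 ⟨i, hi⟩)] at hrest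
  rw [← hsum, ← add_sum_erase s p hi]
  linarith

theorem mul_negMulLog_le_negMulLog {l u x : ℝ} (hl0 : 0 ≤ l) (hl1 : l ≤ 1) (hu : 0 ≤ u)
    (hlow : l * u ≤ x) (hupp : x ≤ 1 - l + l * u) :
    l * Real.negMulLog u ≤ Real.negMulLog x := by
  rcases hl1.eq_or_lt with rfl | hl1
  · obtain rfl : x = u := le_antisymm (by linarith) (by linarith)
    simp
  set s := (x - l * u) / (1 - l)
  have hs0 : 0 ≤ s := div_nonneg (by linarith) (by linarith)
  have hs1 : s ≤ 1 := (div_le_one (by linarith)).2 (by linarith)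
  have hx : x = l * u + (1 - l) * s := by
    rw [mul_div_cancel₀ _ (by linarith : 1 - l ≠ 0)]; ring
  have hconc := Real.concaveOn_negMulLog.2 (Set.mem_Ici.2 hu) (Set.mem_Ici.2 hs0) hl0
    (by linarith : 0 ≤ 1 - l) (by ring)
  simp only [smul_eq_mul, ← hx] at hconc
  nlinarith [Real.negMulLog_nonneg hs0 hs1]

theorem mul_log_card_le_sum_negMulLog {ι : Type*} (s : Finset ι) {p : ι → ℝ} {l : ℝ}
    (hl0 : 0 ≤ l) (hl1 : l ≤ 1) (hp : ∀ i ∈ s, l / #s ≤ p i) (hsum : ∑ i ∈ s, p i = 1) :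
    l * Real.log #s ≤ ∑ i ∈ s, Real.negMulLog (p i) := by
  have hs : (#s : ℝ) ≠ 0 := by
    simpa using (nonempty_of_sum_ne_zero (hsum.symm ▸ one_ne_zero)).ne_empty
  have hterm : ∀ i ∈ s, l * Real.negMulLog (#s)⁻¹ ≤ Real.negMulLog (p i) := fun i hi =>
    mul_negMulLog_le_negMulLog hl0 hl1 (by positivity) (div_eq_mul_inv l _ ▸ hp i hi) <| by
      have := le_sub_mul_of_forall_le_of_sum_eq hi hp hsum
      field_simp at this ⊢
      linarith
  calc l * Real.log #s = ∑ i ∈ s, l * Real.negMulLog (#s)⁻¹ := by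
        simp only [sum_const, nsmul_eq_mul, Real.negMulLog, Real.log_inv]
        field_simp
    _ ≤ ∑ i ∈ s, Real.negMulLog (p i) := sum_le_sum hterm

theorem neg_sum_mul_logb_eq_sum_negMulLog_div {ι : Type*} (s : Finset ι) (p : ι → ℝ) (b : ℝ) :
    -∑ i ∈ s, p i * Real.logb b (p i) = (∑ i ∈ s, Real.negMulLog (p i)) / Real.log b := by
  simp only [Real.logb, Real.negMulLog, sum_div, ← sum_neg_distrib]
  refine sum_congr rfl fun i _ => ?_
  ring

theorem balanced_geohash_entropy_bound_general (F FN : ℝ → ℝ)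
    (hF0 : F 0 = 0) (hF1 : F 1 = 1)
    (N q : ℕ) (A : ℝ) (hA : A ∈ Set.Icc (0 : ℝ) 1)
    (hclose : ∀ x : ℝ, |F x - FN x| ≤ (1 - A) * ((N : ℝ) / (N + 2)) * (1 / 2 ^ (q + 1)))
    (hbal : ∀ i ∈ Finset.Icc (1 : ℕ) (2 ^ q),
      FN ((i : ℝ) / 2 ^ q) - FN (((i : ℝ) - 1) / 2 ^ q) = ((N : ℝ) / (N + 2)) * (1 / 2 ^ q)) :
    (∀ i ∈ Finset.Icc (1 : ℕ) (2 ^ q),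
        A * ((N : ℝ) / (N + 2)) * (1 / 2 ^ q)
          ≤ F ((i : ℝ) / 2 ^ q) - F (((i : ℝ) - 1) / 2 ^ q)) ∧
      (q : ℝ) * A * ((N : ℝ) / (N + 2))
        ≤ -∑ i ∈ Finset.Icc (1 : ℕ) (2 ^ q),
            (F ((i : ℝ) / 2 ^ q) - F (((i : ℝ) - 1) / 2 ^ q)) *
              Real.logb 2 (F ((i : ℝ) / 2 ^ q) - F (((i : ℝ) - 1) / 2 ^ q)) := by
  obtain ⟨hA0, hA1⟩ := hA
  set r : ℝ := (N : ℝ) / (N + 2)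
  set m : ℕ → ℝ := fun i => F ((i : ℝ) / 2 ^ q) - F (((i : ℝ) - 1) / 2 ^ q)
  have hr : r ≤ 1 := div_le_one_of_le₀ (by linarith) (by positivity)
  have hcard : (#(Icc 1 (2 ^ q)) : ℝ) = 2 ^ q := by simp
  have hε : (1 - A) * r * (1 / 2 ^ (q + 1)) = (1 - A) * r * (1 / 2 ^ q) / 2 := by
    rw [pow_succ]; ring
  have hmass : ∀ i ∈ Icc 1 (2 ^ q), A * r * (1 / 2 ^ q) ≤ m i := fun i hi => by
    have hright := abs_le.1 (hε ▸ hclose ((i : ℝ) / 2 ^ q))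
    have hleft := abs_le.1 (hε ▸ hclose (((i : ℝ) - 1) / 2 ^ q))
    have := hbal i hi
    simp only [m]
    linarith [hright.1, hright.2, hleft.1, hleft.2]
  have hsum : ∑ i ∈ Icc 1 (2 ^ q), m i = 1 := by
    refine (sum_Icc_sub_natCast_sub_one (fun x : ℝ => F (x / 2 ^ q)) (2 ^ q)).trans ?_
    simp [hF0, hF1]
  refine ⟨hmass, ?_⟩
  have hent := mul_log_card_le_sum_negMulLog (Icc 1 (2 ^ q)) (mul_nonneg hA0 (by positivity))
    (mul_le_one₀ hA1 (by positivity) hr) (fun i hi => by rw [hcard, div_eq_mul_one_div]; exact hmass i hi) hsum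
  rw [hcard, Real.log_pow] at hent
  rw [neg_sum_mul_logb_eq_sum_negMulLog_div, le_div_iff₀ (Real.log_pos one_lt_two)]
  linarith

/-- Deterministic core of Theorem 1: if the empirical CDF is uniformly `ε`-close to the
true CDF and the empirical buckets are exactly balanced, then every true bucket mass is
at least `A·(N/(N+2))·2^{-q}` and the bucket entropy is at least `q·A·N/(N+2)`. -/
theorem balanced_geohash_entropy_bound (F FN : ℝ → ℝ)
    (hF0 : F 0 = 0) (hF1 : F 1 = 1) (hFmono : Monotone F)
    (N q : ℕ) (A : ℝ) (hA : A ∈ Set.Icc (0 : ℝ) 1)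
    (hclose : ∀ x : ℝ, |F x - FN x| ≤ (1 - A) * ((N : ℝ) / (N + 2)) * (1 / 2 ^ (q + 1)))
    (hbal : ∀ i ∈ Finset.Icc (1 : ℕ) (2 ^ q),
      FN ((i : ℝ) / 2 ^ q) - FN (((i : ℝ) - 1) / 2 ^ q) = ((N : ℝ) / (N + 2)) * (1 / 2 ^ q)) :
    (∀ i ∈ Finset.Icc (1 : ℕ) (2 ^ q),
        A * ((N : ℝ) / (N + 2)) * (1 / 2 ^ q)
          ≤ F ((i : ℝ) / 2 ^ q) - F (((i : ℝ) - 1) / 2 ^ q)) ∧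
      (q : ℝ) * A * ((N : ℝ) / (N + 2))
        ≤ -∑ i ∈ Finset.Icc (1 : ℕ) (2 ^ q),
            (F ((i : ℝ) / 2 ^ q) - F (((i : ℝ) - 1) / 2 ^ q)) *
              Real.logb 2 (F ((i : ℝ) / 2 ^ q) - F (((i : ℝ) - 1) / 2 ^ q)) :=
  balanced_geohash_entropy_bound_general F FN hF0 hF1 N q A hA hclose hbal
end

section
/- (Theorem 1) Let b_q^q be the entropy-balanced q-bit geohash estimated from N unique i.i.d. sample points. Then for any A ∈ [0,1], with probability at least 1 − 2·exp(−0.49·2^{−2q}·N·(1−A)²), the entropy satisfies H(b_q^q(𝔉)) ≥ q·(N/(N+2))·A. -/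
noncomputable section
open Finset MeasureTheory

private lemma binary_entropy_lb {x y : ℝ} (hx : 0 < x) (hxy : x ≤ y) (hsum : x + y = 1) :
    2 * x ≤ -(x * Real.logb 2 x + y * Real.logb 2 y) := by
  have hy1 : y < 1 := by linarith
  have hy0 : 0 < y := by linarith
  have hx2 : x ≤ 1/2 := by linarith
  have hL : 0 < Real.log 2 := Real.log_pos one_lt_two
  have t1 : x ≤ -(x * Real.logb 2 x) := by
    have hlog : Real.logb 2 x ≤ -1 := by
      rw [Real.logb, div_le_iff₀ hL]
      have h1 : Real.log x ≤ Real.log (1/2) := Real.log_le_log hx hx2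
      rw [show (1:ℝ)/2 = 2⁻¹ by norm_num, Real.log_inv] at h1
      linarith
    nlinarith [mul_le_mul_of_nonneg_left hlog hx.le]
  have t2 : x ≤ -(y * Real.logb 2 y) := by
    rw [Real.logb, show -(y * (Real.log y / Real.log 2)) = (-(y * Real.log y)) / Real.log 2 by ring,
      le_div_iff₀ hL]
    have hlog1 : Real.log y ≤ y - 1 := Real.log_le_sub_one_of_pos hy0
    have hlog2 : Real.log (2*y) ≤ 2*y - 1 := Real.log_le_sub_one_of_pos (by linarith)
    rw [Real.log_mul (by norm_num) (ne_of_gt hy0)] at hlog2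
    rcases le_total y (Real.log 2) with hc | hc
    · nlinarith [mul_le_mul_of_nonneg_left hlog2 hy0.le,
        mul_nonneg (by linarith : (0:ℝ) ≤ 2*y - 1) (by linarith : (0:ℝ) ≤ Real.log 2 - y)]
    · nlinarith [mul_le_mul_of_nonneg_left hlog1 hy0.le,
        mul_nonneg (by linarith : (0:ℝ) ≤ 1 - y) (by linarith : (0:ℝ) ≤ y - Real.log 2)]
  linarith

private lemma entropy_lb (q : ℕ) (r A : ℝ) (hr0 : 0 ≤ r) (hr1 : r ≤ 1)
    (hA0 : 0 ≤ A) (hA1 : A ≤ 1) (p : ℕ → ℝ)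
    (hsum : ∑ i ∈ Finset.Icc 1 (2 ^ q), p i = 1)
    (hlb : ∀ i ∈ Finset.Icc 1 (2 ^ q), A * r * (1 / 2 ^ q) ≤ p i)
    (hub : ∀ i ∈ Finset.Icc 1 (2 ^ q), p i ≤ (2 - A) * r * (1 / 2 ^ q)) :
    (q : ℝ) * r * A ≤ -∑ i ∈ Finset.Icc 1 (2 ^ q), p i * Real.logb 2 (p i) := by
  have hL : 0 < Real.log 2 := Real.log_pos one_lt_two
  have hp0 : ∀ i ∈ Finset.Icc 1 (2 ^ q), 0 ≤ p i := by
    intro i hi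
    exact le_trans (by positivity) (hlb i hi)
  have hp1 : ∀ i ∈ Finset.Icc 1 (2 ^ q), p i ≤ 1 := by
    intro i hi
    calc p i ≤ ∑ j ∈ Finset.Icc 1 (2 ^ q), p j := Finset.single_le_sum hp0 hi
    _ = 1 := hsum
  have hH0 : 0 ≤ -∑ i ∈ Finset.Icc 1 (2 ^ q), p i * Real.logb 2 (p i) := by
    rw [neg_nonneg]
    refine Finset.sum_nonpos fun i hi => ?_
    exact mul_nonpos_of_nonneg_of_nonpos (hp0 i hi)
      (Real.logb_nonpos one_lt_two (hp0 i hi) (hp1 i hi))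
  rcases (mul_nonneg hA0 hr0).eq_or_lt with h0 | hpos
  · have : (q : ℝ) * r * A = 0 := by
      rw [mul_assoc, mul_comm r A, ← h0, mul_zero]
    linarith
  have hApos : 0 < A := by nlinarith
  have hrpos : 0 < r := by nlinarith
  match q with
  | 0 => simpa using hH0
  | 1 =>
      have hIcc : Finset.Icc (1:ℕ) (2 ^ 1) = {1, 2} := rfl
      rw [hIcc] at hsum hlb hub ⊢
      rw [Finset.sum_insert (by decide), Finset.sum_singleton] at hsum ⊢
      have h1 := hlb 1 (by decide)
      have h2 := hlb 2 (by decide)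
      have ha : (0:ℝ) < A * r * (1 / 2 ^ 1) := by positivity
      rcases le_total (p 1) (p 2) with hc | hc
      · have := binary_entropy_lb (by linarith : 0 < p 1) hc hsum
        push_cast
        nlinarith
      · have := binary_entropy_lb (by linarith : 0 < p 2) hc (by linarith)
        push_cast
        nlinarith
  | (q + 2) =>
      set n := q + 2 with hn
      have h2A : (0:ℝ) < 2 - A := by linarith
      have hb0 : (0:ℝ) < (2 - A) * r * (1 / 2 ^ n) := by positivity
      have step1 : ∑ i ∈ Finset.Icc 1 (2 ^ n), p i * Real.logb 2 (p i)
          ≤ Real.logb 2 ((2 - A) * r * (1 / 2 ^ n)) := by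
        calc ∑ i ∈ Finset.Icc 1 (2 ^ n), p i * Real.logb 2 (p i)
            ≤ ∑ i ∈ Finset.Icc 1 (2 ^ n), p i * Real.logb 2 ((2 - A) * r * (1 / 2 ^ n)) := by
              refine Finset.sum_le_sum fun i hi => ?_
              rcases (hp0 i hi).eq_or_lt with hz | hz
              · simp [← hz]
              · exact mul_le_mul_of_nonneg_left
                  (Real.logb_le_logb_of_le one_lt_two hz (hub i hi)) (hp0 i hi)
        _ = Real.logb 2 ((2 - A) * r * (1 / 2 ^ n)) := by
              rw [← Finset.sum_mul, hsum, one_mul]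
      have step2 : (n : ℝ) * r * A ≤ -Real.logb 2 ((2 - A) * r * (1 / 2 ^ n)) := by
        rw [Real.logb, ← neg_div, le_div_iff₀ hL]
        have hne : ((2:ℝ) ^ n) ≠ 0 := by positivity
        have hlogsplit : Real.log ((2 - A) * r * (1 / 2 ^ n))
            = Real.log (2 - A) + Real.log r + (-(n * Real.log 2)) := by
          rw [Real.log_mul (by positivity) (by positivity), Real.log_mul h2A.ne' hrpos.ne',
            one_div, Real.log_inv, Real.log_pow]
        rw [hlogsplit]
        have e1 : Real.log (2 - A) ≤ 1 - A := by
          have := Real.log_le_sub_one_of_pos h2A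
          linarith
        have e2 : Real.log r ≤ 0 := Real.log_nonpos hr0 hr1
        have e3 : (0.6931471803 : ℝ) < Real.log 2 := Real.log_two_gt_d9
        have hq0 : (0:ℝ) ≤ (q : ℝ) := Nat.cast_nonneg q
        have hnr : (n : ℝ) = (q : ℝ) + 2 := by push_cast [hn]; ring
        rw [hnr]
        have hra : r * A ≤ A := mul_le_of_le_one_left hA0 hr1
        nlinarith [mul_nonneg (mul_nonneg hq0 hL.le) (by nlinarith : (0:ℝ) ≤ 1 - r * A),
          mul_nonneg hL.le (by nlinarith : (0:ℝ) ≤ 1 - r * A),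
          mul_nonneg hL.le (by linarith : (0:ℝ) ≤ 1 - A)]
      linarith

private lemma tel_sum (g : ℕ → ℝ) (n : ℕ) :
    ∑ i ∈ Finset.Icc 1 n, (g i - g (i - 1)) = g n - g 0 := by
  induction n with
  | zero => simp
  | succ n ih =>
      rw [Finset.sum_Icc_succ_top (Nat.one_le_iff_ne_zero.mpr (Nat.succ_ne_zero n)), ih]
      simp


/-- Theorem 1 of the paper: with probability at least
`1 - 2·exp(-0.49·2^{-2q}·N·(1-A)²)`, the entropy of the q-bit balanced geohash
(whose bucket boundaries `t ω i` are empirical quantiles, each bucket carrying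
empirical mass `(N/(N+2))·2^{-q}`) is at least `q·(N/(N+2))·A`.  The
Dvoretzky–Kiefer–Wolfowitz bound with `ε = (1-A)·(N/(N+2))·2^{-(q+1)}` is
assumed as a hypothesis. -/
theorem balanced_geohash_entropy_probability_bound {Ω : Type*} [MeasurableSpace Ω]
    (μ : Measure Ω) [IsProbabilityMeasure μ] (N q : ℕ)
    (A : ℝ) (hA : A ∈ Set.Icc (0 : ℝ) 1)
    (F : ℝ → ℝ) (hFmono : Monotone F)
    (FN : Ω → ℝ → ℝ) (t : Ω → ℕ → ℝ)
    (hF0 : ∀ ω, F (t ω 0) = 0) (hF1 : ∀ ω, F (t ω (2 ^ q)) = 1)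
    (htmono : ∀ ω, Monotone (t ω))
    (hbal : ∀ ω, ∀ i ∈ Finset.Icc (1 : ℕ) (2 ^ q),
      FN ω (t ω i) - FN ω (t ω (i - 1)) = ((N : ℝ) / (N + 2)) * (1 / 2 ^ q))
    (hDKW : μ {ω | ∃ x : ℝ,
          (1 - A) * ((N : ℝ) / (N + 2)) * (1 / 2 ^ (q + 1)) < |F x - FN ω x|}
        ≤ ENNReal.ofReal (2 * Real.exp (-(0.49) * (1 / 2 ^ (2 * q)) * N * (1 - A) ^ 2))) :
    (1 : ENNReal)
        - ENNReal.ofReal (2 * Real.exp (-(0.49) * (1 / 2 ^ (2 * q)) * N * (1 - A) ^ 2))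
      ≤ μ {ω | (q : ℝ) * ((N : ℝ) / (N + 2)) * A
          ≤ -∑ i ∈ Finset.Icc (1 : ℕ) (2 ^ q),
              (F (t ω i) - F (t ω (i - 1))) *
                Real.logb 2 (F (t ω i) - F (t ω (i - 1)))} := by
  set r : ℝ := (N : ℝ) / (N + 2) with hr
  set ε : ℝ := (1 - A) * r * (1 / 2 ^ (q + 1)) with hε
  set B : Set Ω := {ω | ∃ x : ℝ, ε < |F x - FN ω x|} with hB
  set T : Set Ω := {ω | (q : ℝ) * r * A
      ≤ -∑ i ∈ Finset.Icc (1 : ℕ) (2 ^ q),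
          (F (t ω i) - F (t ω (i - 1))) *
            Real.logb 2 (F (t ω i) - F (t ω (i - 1)))} with hT
  have hr0 : 0 ≤ r := by positivity
  have hr1 : r ≤ 1 := by
    rw [hr, div_le_one (by positivity)]
    push_cast
    linarith
  have hsub : Bᶜ ⊆ T := by
    intro ω hω
    have hgood : ∀ x : ℝ, |F x - FN ω x| ≤ ε := by
      intro x
      by_contra hcon
      exact hω ⟨x, lt_of_not_ge hcon⟩
    have h2q : ((2:ℝ) ^ q) ≠ 0 := by positivity
    have hpow : (2:ℝ) ^ (q + 1) = 2 ^ q * 2 := pow_succ 2 q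
    refine entropy_lb q r A hr0 hr1 hA.1 hA.2 _ ?_ ?_ ?_
    · have := tel_sum (fun i => F (t ω i)) (2 ^ q)
      rw [this, hF0 ω, hF1 ω]
      norm_num
    · intro i hi
      have hb := hbal ω i hi
      have h1 := abs_le.mp (hgood (t ω i))
      have h2 := abs_le.mp (hgood (t ω (i - 1)))
      have key : A * r * (1 / 2 ^ q) = r * (1 / 2 ^ q) - 2 * ε := by
        rw [hε, hpow]
        field_simp
        ring
      rw [key]
      linarith [h1.2, h2.2, h1.1, h2.1]
    · intro i hi
      have hb := hbal ω i hi
      have h1 := abs_le.mp (hgood (t ω i))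
      have h2 := abs_le.mp (hgood (t ω (i - 1)))
      have key : (2 - A) * r * (1 / 2 ^ q) = r * (1 / 2 ^ q) + 2 * ε := by
        rw [hε, hpow]
        field_simp
        ring
      rw [key]
      linarith [h1.2, h2.2, h1.1, h2.1]
  calc (1 : ENNReal)
      - ENNReal.ofReal (2 * Real.exp (-(0.49) * (1 / 2 ^ (2 * q)) * N * (1 - A) ^ 2))
      ≤ 1 - μ B := tsub_le_tsub_left hDKW 1
    _ ≤ μ Bᶜ := by
        rw [tsub_le_iff_right]
        calc (1 : ENNReal) = μ Set.univ := (measure_univ).symm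
          _ = μ (Bᶜ ∪ B) := by rw [Set.compl_union_self]
          _ ≤ μ Bᶜ + μ B := measure_union_le _ _
    _ ≤ μ T := measure_mono hsub
end
end

section
/- Two points (x,y) and (x',y') in [0,1)² share the same q-bit geohash g_q if and only if the first ⌈q/2⌉ binary digits of x and x' agree and the first ⌊q/2⌋ binary digits of y and y' agree; hence the preimage of each q-bit geohash value is a dyadic rectangle of width 2^{−⌈q/2⌉} and height 2^{−⌊q/2⌋}. -/
noncomputable section
open Finset

/-- `d` (indexed from 1) is a binary digit expansion of `x` with no infinite
trailing tail of 1s. -/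
def IsBinExp (x : ℝ) (d : ℕ → ℝ) : Prop :=
  (∀ i, d i = 0 ∨ d i = 1) ∧ (∀ n, ∃ m, n ≤ m ∧ d m = 0) ∧
    HasSum (fun i : ℕ => d (i + 1) / 2 ^ (i + 1)) x

/-- The `q`-bit geohash, interleaving the first `⌈q/2⌉` digits of `x` with the
first `⌊q/2⌋` digits of `y`. -/
def gq (xd yd : ℕ → ℝ) (q : ℕ) : ℝ :=
  (∑ i ∈ Finset.range ((q + 1) / 2), xd (i + 1) / 2 ^ (2 * i + 1)) +
    ∑ i ∈ Finset.range (q / 2), yd (i + 1) / 2 ^ (2 * i + 2)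

/-- The infinite-precision geohash: full digit interleaving. -/
def gI (xd yd : ℕ → ℝ) : ℝ :=
  (∑' i : ℕ, xd (i + 1) / 2 ^ (2 * i + 1)) + ∑' i : ℕ, yd (i + 1) / 2 ^ (2 * i + 2)

/-! The `q`-bit geohash is the `q`-digit binary truncation `∑_{j ≤ q} z_j / 2^j` of the
interleaved digit sequence `z = x₁ y₁ x₂ y₂ …`. A truncation `s_n` of a 0/1 sequence is a
multiple of `2⁻ⁿ`, so any number in `[s_n, s_n + 2⁻ⁿ)` determines it as `⌊2ⁿ t⌋ / 2ⁿ`; peeling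
off the last digit shows that `s_n` determines the first `n` digits. Since an expansion has no
tail of 1s, `x` lies in `[s_n, s_n + 2⁻ⁿ)` for its own truncations, so the points whose
expansions share the first digits of `x` form exactly that interval, coordinate by coordinate. -/

def IsBinaryDigits (d : ℕ → ℝ) : Prop := ∀ i, d i = 0 ∨ d i = 1

def binPartialSum (d : ℕ → ℝ) (n : ℕ) : ℝ := ∑ i ∈ range n, d (i + 1) / 2 ^ (i + 1)

namespace IsBinaryDigits

variable {d : ℕ → ℝ}

lemma nonneg (hd : IsBinaryDigits d) (i : ℕ) : 0 ≤ d i := by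
  rcases hd i with h | h <;> simp [h]

lemma le_one (hd : IsBinaryDigits d) (i : ℕ) : d i ≤ 1 := by
  rcases hd i with h | h <;> simp [h]

end IsBinaryDigits

section BinPartialSum

variable {d e : ℕ → ℝ} {x : ℝ}

@[simp]
lemma binPartialSum_zero (d : ℕ → ℝ) : binPartialSum d 0 = 0 := by
  simp [binPartialSum]

lemma binPartialSum_succ (d : ℕ → ℝ) (n : ℕ) :
    binPartialSum d (n + 1) = binPartialSum d n + d (n + 1) / 2 ^ (n + 1) :=
  sum_range_succ _ _

lemma binPartialSum_le_succ (hd : IsBinaryDigits d) (n : ℕ) :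
    binPartialSum d n ≤ binPartialSum d (n + 1) := by
  rw [binPartialSum_succ]
  exact le_add_of_nonneg_right (div_nonneg (hd.nonneg _) (by positivity))

lemma binPartialSum_nonneg (hd : IsBinaryDigits d) (n : ℕ) : 0 ≤ binPartialSum d n :=
  sum_nonneg fun _ _ => div_nonneg (hd.nonneg _) (by positivity)

lemma binPartialSum_le_add (hd : IsBinaryDigits d) {m n : ℕ} (hmn : m ≤ n) :
    binPartialSum d n ≤ binPartialSum d m + (1 / 2 ^ m - 1 / 2 ^ n) := by
  induction n, hmn using Nat.le_induction with
  | base => simp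
  | succ n _ ih =>
    have hdigit : d (n + 1) / 2 ^ (n + 1) ≤ 1 / 2 ^ (n + 1) := by
      gcongr; exact hd.le_one _
    have hhalf : (1 : ℝ) / 2 ^ (n + 1) = 1 / 2 ^ n - 1 / 2 ^ (n + 1) := by
      rw [pow_succ]; field_simp; ring
    rw [binPartialSum_succ]
    linarith

lemma binPartialSum_add_le_one (hd : IsBinaryDigits d) (n : ℕ) :
    binPartialSum d n + 1 / 2 ^ n ≤ 1 := by
  have h := binPartialSum_le_add hd (Nat.zero_le n)
  rw [binPartialSum_zero, pow_zero, div_one] at h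
  linarith

lemma binPartialSum_succ_mem_Ico (hd : IsBinaryDigits d) (n : ℕ) :
    binPartialSum d (n + 1) ∈ Set.Ico (binPartialSum d n) (binPartialSum d n + 1 / 2 ^ n) := by
  refine ⟨binPartialSum_le_succ hd n, ?_⟩
  have := binPartialSum_le_add hd (n.le_add_right 1)
  have : (0 : ℝ) < 1 / 2 ^ (n + 1) := by positivity
  linarith

lemma exists_int_binPartialSum_eq (hd : IsBinaryDigits d) (n : ℕ) :
    ∃ k : ℤ, binPartialSum d n = k / 2 ^ n := by
  induction n with
  | zero => exact ⟨0, by simp⟩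
  | succ n ih =>
    obtain ⟨k, hk⟩ := ih
    obtain ⟨b, hbd⟩ : ∃ b : ℤ, d (n + 1) = b := by
      rcases hd (n + 1) with h | h
      · exact ⟨0, by simp [h]⟩
      · exact ⟨1, by simp [h]⟩
    refine ⟨2 * k + b, ?_⟩
    rw [binPartialSum_succ, hk, hbd, pow_succ]
    push_cast
    field_simp

lemma binPartialSum_eq_floor {n : ℕ} (hd : IsBinaryDigits d)
    (hx : x ∈ Set.Ico (binPartialSum d n) (binPartialSum d n + 1 / 2 ^ n)) :
    binPartialSum d n = ⌊2 ^ n * x⌋ / 2 ^ n := by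
  obtain ⟨k, hk⟩ := exists_int_binPartialSum_eq hd n
  have h2n : (0 : ℝ) < 2 ^ n := by positivity
  rw [hk, ← add_div] at hx
  rw [hk, Int.floor_eq_iff.mpr]
  constructor
  · rw [← div_le_iff₀' h2n]; exact hx.1
  · rw [← lt_div_iff₀' h2n]; exact hx.2

lemma binPartialSum_eq_of_mem_Ico {n : ℕ} (hd : IsBinaryDigits d) (he : IsBinaryDigits e)
    (hxd : x ∈ Set.Ico (binPartialSum d n) (binPartialSum d n + 1 / 2 ^ n))
    (hxe : x ∈ Set.Ico (binPartialSum e n) (binPartialSum e n + 1 / 2 ^ n)) :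
    binPartialSum d n = binPartialSum e n := by
  rw [binPartialSum_eq_floor hd hxd, binPartialSum_eq_floor he hxe]

lemma binPartialSum_eq_binPartialSum_iff (hd : IsBinaryDigits d) (he : IsBinaryDigits e) (n : ℕ) :
    binPartialSum d n = binPartialSum e n ↔ ∀ i ∈ Icc 1 n, d i = e i := by
  refine ⟨fun h => ?_, fun h => sum_congr rfl fun i hi => ?_⟩
  · induction n with
    | zero => simp
    | succ n ih =>
      have hprefix : binPartialSum d n = binPartialSum e n := by
        refine binPartialSum_eq_of_mem_Ico hd he (binPartialSum_succ_mem_Ico hd n) ?_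
        rw [h]; exact binPartialSum_succ_mem_Ico he n
      have hlast : d (n + 1) = e (n + 1) := by
        rw [binPartialSum_succ, binPartialSum_succ, hprefix, add_right_inj] at h
        exact (div_left_inj' (by positivity)).mp h
      intro i hi
      rcases (mem_Icc.mp hi).2.lt_or_eq with hlt | rfl
      · exact ih hprefix i (mem_Icc.mpr ⟨(mem_Icc.mp hi).1, by omega⟩)
      · exact hlast
  · rw [h (i + 1) (mem_Icc.mpr ⟨by omega, by simpa using hi⟩)]

end BinPartialSum

section Expansion

variable {d : ℕ → ℝ} {x : ℝ}

lemma hasSum_geometric_two_tail (n : ℕ) :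
    HasSum (fun i : ℕ => (1 : ℝ) / 2 ^ (i + n + 1)) (1 / 2 ^ n) := by
  convert hasSum_geometric_two' (1 / 2 ^ n : ℝ) using 2 with i
  rw [pow_succ, pow_add]
  field_simp

namespace HasSum

variable (hs : HasSum (fun i : ℕ => d (i + 1) / 2 ^ (i + 1)) x)
include hs

lemma sub_binPartialSum (n : ℕ) :
    HasSum (fun i : ℕ => d (i + n + 1) / 2 ^ (i + n + 1)) (x - binPartialSum d n) :=
  (hasSum_nat_add_iff' n).mpr hs

lemma binPartialSum_le (hd : IsBinaryDigits d) (n : ℕ) : binPartialSum d n ≤ x :=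
  sub_nonneg.mp <| (hs.sub_binPartialSum n).nonneg fun i => div_nonneg (hd.nonneg _) (by positivity)

lemma lt_binPartialSum_add (hd : IsBinaryDigits d) {m n : ℕ} (hnm : n < m) (hm : d m = 0) :
    x < binPartialSum d n + 1 / 2 ^ n := by
  have hm' : m - n - 1 + n + 1 = m := by omega
  have := hasSum_lt (i := m - n - 1) (fun i => by gcongr; exact hd.le_one _)
    (by rw [hm', hm, zero_div]; positivity) (hs.sub_binPartialSum n) (hasSum_geometric_two_tail n)
  linarith

lemma eq_binPartialSum_add {n : ℕ} (h1 : ∀ m, n < m → d m = 1) :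
    x = binPartialSum d n + 1 / 2 ^ n := by
  have htail : HasSum (fun i : ℕ => d (i + n + 1) / 2 ^ (i + n + 1)) (1 / 2 ^ n) := by
    convert hasSum_geometric_two_tail n using 2 with i
    rw [h1 _ (by omega)]
  linarith [(hs.sub_binPartialSum n).unique htail]

end HasSum

lemma IsBinExp.mem_Ico_binPartialSum (h : IsBinExp x d) (n : ℕ) :
    x ∈ Set.Ico (binPartialSum d n) (binPartialSum d n + 1 / 2 ^ n) := by
  obtain ⟨hd, htail, hs⟩ := h
  obtain ⟨m, hm, hm0⟩ := htail (n + 1)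
  exact ⟨hs.binPartialSum_le hd n, hs.lt_binPartialSum_add hd hm hm0⟩

lemma exists_isBinExp (hx : x ∈ Set.Ico (0 : ℝ) 1) : ∃ d, IsBinExp x d := by
  set d : ℕ → ℝ := fun i => ((Real.digits x 2 (i - 1) : ℕ) : ℝ)
  have hd : IsBinaryDigits d := fun i => by
    rcases Fin.exists_fin_two.mp ⟨Real.digits x 2 (i - 1), rfl⟩ with h | h <;> simp [d, h]
  have hterm : (fun i : ℕ => d (i + 1) / 2 ^ (i + 1)) = Real.ofDigitsTerm (Real.digits x 2) := by
    ext i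
    simp [d, Real.ofDigitsTerm, div_eq_mul_inv]
  have hs : HasSum (fun i : ℕ => d (i + 1) / 2 ^ (i + 1)) x := by
    rw [hterm]; exact Real.hasSum_ofDigitsTerm_digits x one_lt_two hx
  refine ⟨d, hd, fun n => ?_, hs⟩
  by_contra! hones
  have hx_eq := hs.eq_binPartialSum_add fun m hm => (hd m).resolve_left (hones m hm.le)
  -- The truncations of `Real.digits` are `⌊2ⁿ x⌋₊ / 2ⁿ > x - 2⁻ⁿ`, contradicting `hx_eq`.
  have hfloor : 2 ^ n * binPartialSum d n = ⌊2 ^ n * x⌋₊ := by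
    have := Real.ofDigits_digits_sum_eq (b := 2) hx n
    rw [← hterm] at this
    unfold binPartialSum
    exact_mod_cast this
  have := Nat.lt_floor_add_one (2 ^ n * x)
  rw [← hfloor, hx_eq] at this
  have : (2 : ℝ) ^ n * (1 / 2 ^ n) = 1 := by field_simp
  nlinarith

end Expansion

-- `interleave d e` is `_, d₁, e₁, d₂, e₂, …`: indexed from 1, like the expansions.
def interleave (d e : ℕ → ℝ) (j : ℕ) : ℝ :=
  if j % 2 = 1 then d ((j + 1) / 2) else e (j / 2)

lemma IsBinaryDigits.interleave {d e : ℕ → ℝ} (hd : IsBinaryDigits d) (he : IsBinaryDigits e) :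
    IsBinaryDigits (interleave d e) := fun j => by
  unfold _root_.interleave
  split_ifs
  exacts [hd _, he _]

lemma forall_interleave_eq_iff {d e d' e' : ℕ → ℝ} (q : ℕ) :
    (∀ j ∈ Icc 1 q, interleave d e j = interleave d' e' j) ↔
      (∀ i ∈ Icc 1 ((q + 1) / 2), d i = d' i) ∧ ∀ i ∈ Icc 1 (q / 2), e i = e' i := by
  simp only [mem_Icc]
  constructor
  · intro h
    refine ⟨fun i hi => ?_, fun i hi => ?_⟩
    · have hodd : (2 * i - 1) % 2 = 1 := by omega
      have hhalf : (2 * i - 1 + 1) / 2 = i := by omega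
      simpa [interleave, hodd, hhalf] using h (2 * i - 1) (by omega)
    · have heven : 2 * i % 2 = 0 := by omega
      have hhalf : 2 * i / 2 = i := by omega
      simpa [interleave, heven, hhalf] using h (2 * i) (by omega)
  · rintro ⟨hd, he⟩ j hj
    unfold interleave
    split_ifs
    · exact hd _ (by omega)
    · exact he _ (by omega)

lemma gq_eq_binPartialSum_interleave (xd yd : ℕ → ℝ) (q : ℕ) :
    gq xd yd q = binPartialSum (interleave xd yd) q := by
  induction q with
  | zero => simp [gq]
  | succ q ih =>
    rw [binPartialSum_succ, ← ih]
    obtain ⟨k, rfl | rfl⟩ := Nat.even_or_odd' q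
    · have h1 : (2 * k + 1 + 1) / 2 = k + 1 := by omega
      have h2 : (2 * k + 1) / 2 = k := by omega
      have h3 : 2 * k / 2 = k := by omega
      have h4 : (2 * k + 1) % 2 = 1 := by omega
      simp only [gq, interleave, h1, h2, h3, h4, sum_range_succ, if_true]
      ring
    · have h1 : (2 * k + 1 + 1 + 1) / 2 = k + 1 := by omega
      have h2 : (2 * k + 1 + 1) / 2 = k + 1 := by omega
      have h3 : (2 * k + 1) / 2 = k := by omega
      have h4 : (2 * k + 1 + 1) % 2 = 0 := by omega
      simp only [gq, interleave, h1, h2, h3, h4, sum_range_succ, zero_ne_one, if_false]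
      ring

lemma gq_eq_gq_iff {xd yd xd' yd' : ℕ → ℝ} (hxd : IsBinaryDigits xd) (hyd : IsBinaryDigits yd)
    (hxd' : IsBinaryDigits xd') (hyd' : IsBinaryDigits yd') (q : ℕ) :
    gq xd yd q = gq xd' yd' q ↔
      (∀ i ∈ Icc 1 ((q + 1) / 2), xd i = xd' i) ∧ ∀ i ∈ Icc 1 (q / 2), yd i = yd' i := by
  rw [gq_eq_binPartialSum_interleave, gq_eq_binPartialSum_interleave,
    binPartialSum_eq_binPartialSum_iff (hxd.interleave hyd) (hxd'.interleave hyd'),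
    forall_interleave_eq_iff]

lemma IsBinExp.mem_Ico_binPartialSum_iff {p : ℝ} {d e : ℕ → ℝ} (he : IsBinExp p e)
    (hd : IsBinaryDigits d) (n : ℕ) :
    p ∈ Set.Ico (binPartialSum d n) (binPartialSum d n + 1 / 2 ^ n) ↔ ∀ i ∈ Icc 1 n, e i = d i := by
  rw [← binPartialSum_eq_binPartialSum_iff he.1 hd]
  refine ⟨binPartialSum_eq_of_mem_Ico he.1 hd (he.mem_Ico_binPartialSum n), fun h => ?_⟩
  rw [← h]
  exact he.mem_Ico_binPartialSum n

lemma Ico_binPartialSum_subset {d : ℕ → ℝ} (hd : IsBinaryDigits d) (n : ℕ) :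
    Set.Ico (binPartialSum d n) (binPartialSum d n + 1 / 2 ^ n) ⊆ Set.Ico 0 1 :=
  Set.Ico_subset_Ico (binPartialSum_nonneg hd n) (binPartialSum_add_le_one hd n)

theorem geohash_preimage_is_dyadic_rectangle_general (x y : ℝ)
    (xd yd : ℕ → ℝ) (hxd : IsBinExp x xd) (hyd : IsBinExp y yd) (q : ℕ) :
    (∀ x' y' : ℝ, x' ∈ Set.Ico (0 : ℝ) 1 → y' ∈ Set.Ico (0 : ℝ) 1 →
      ∀ xd' yd' : ℕ → ℝ, IsBinExp x' xd' → IsBinExp y' yd' →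
        (gq xd yd q = gq xd' yd' q ↔
          (∀ i ∈ Finset.Icc (1 : ℕ) ((q + 1) / 2), xd i = xd' i) ∧
            ∀ i ∈ Finset.Icc (1 : ℕ) (q / 2), yd i = yd' i)) ∧
      {p : ℝ × ℝ | p ∈ Set.Ico (0 : ℝ) 1 ×ˢ Set.Ico (0 : ℝ) 1 ∧
          ∀ xd' yd' : ℕ → ℝ, IsBinExp p.1 xd' → IsBinExp p.2 yd' →
            gq xd' yd' q = gq xd yd q}
        = Set.Ico (∑ i ∈ Finset.range ((q + 1) / 2), xd (i + 1) / 2 ^ (i + 1))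
              ((∑ i ∈ Finset.range ((q + 1) / 2), xd (i + 1) / 2 ^ (i + 1)) +
                1 / 2 ^ ((q + 1) / 2)) ×ˢ
            Set.Ico (∑ i ∈ Finset.range (q / 2), yd (i + 1) / 2 ^ (i + 1))
              ((∑ i ∈ Finset.range (q / 2), yd (i + 1) / 2 ^ (i + 1)) +
                1 / 2 ^ (q / 2)) := by
  refine ⟨fun _ _ _ _ xd' yd' hxd' hyd' => gq_eq_gq_iff hxd.1 hyd.1 hxd'.1 hyd'.1 q, ?_⟩
  ext ⟨px, py⟩
  simp only [Set.mem_ofPred_eq, Set.mem_prod]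
  constructor
  · rintro ⟨⟨hpx, hpy⟩, hgq⟩
    obtain ⟨xd', hxd'⟩ := exists_isBinExp hpx
    obtain ⟨yd', hyd'⟩ := exists_isBinExp hpy
    obtain ⟨hx', hy'⟩ := (gq_eq_gq_iff hxd'.1 hyd'.1 hxd.1 hyd.1 q).mp (hgq xd' yd' hxd' hyd')
    exact ⟨(hxd'.mem_Ico_binPartialSum_iff hxd.1 _).mpr hx',
      (hyd'.mem_Ico_binPartialSum_iff hyd.1 _).mpr hy'⟩
  · rintro ⟨hpx, hpy⟩
    refine ⟨⟨Ico_binPartialSum_subset hxd.1 _ hpx, Ico_binPartialSum_subset hyd.1 _ hpy⟩,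
      fun xd' yd' hxd' hyd' => (gq_eq_gq_iff hxd'.1 hyd'.1 hxd.1 hyd.1 q).mpr ⟨?_, ?_⟩⟩
    · exact (hxd'.mem_Ico_binPartialSum_iff hxd.1 _).mp hpx
    · exact (hyd'.mem_Ico_binPartialSum_iff hyd.1 _).mp hpy

theorem geohash_preimage_is_dyadic_rectangle (x y : ℝ)
    (hx : x ∈ Set.Ico (0 : ℝ) 1) (hy : y ∈ Set.Ico (0 : ℝ) 1)
    (xd yd : ℕ → ℝ) (hxd : IsBinExp x xd) (hyd : IsBinExp y yd) (q : ℕ) :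
    (∀ x' y' : ℝ, x' ∈ Set.Ico (0 : ℝ) 1 → y' ∈ Set.Ico (0 : ℝ) 1 →
      ∀ xd' yd' : ℕ → ℝ, IsBinExp x' xd' → IsBinExp y' yd' →
        (gq xd yd q = gq xd' yd' q ↔
          (∀ i ∈ Finset.Icc (1 : ℕ) ((q + 1) / 2), xd i = xd' i) ∧
            ∀ i ∈ Finset.Icc (1 : ℕ) (q / 2), yd i = yd' i)) ∧
      {p : ℝ × ℝ | p ∈ Set.Ico (0 : ℝ) 1 ×ˢ Set.Ico (0 : ℝ) 1 ∧
          ∀ xd' yd' : ℕ → ℝ, IsBinExp p.1 xd' → IsBinExp p.2 yd' →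
            gq xd' yd' q = gq xd yd q}
        = Set.Ico (∑ i ∈ Finset.range ((q + 1) / 2), xd (i + 1) / 2 ^ (i + 1))
              ((∑ i ∈ Finset.range ((q + 1) / 2), xd (i + 1) / 2 ^ (i + 1)) +
                1 / 2 ^ ((q + 1) / 2)) ×ˢ
            Set.Ico (∑ i ∈ Finset.range (q / 2), yd (i + 1) / 2 ^ (i + 1))
              ((∑ i ∈ Finset.range (q / 2), yd (i + 1) / 2 ^ (i + 1)) +
                1 / 2 ^ (q / 2)) :=
  geohash_preimage_is_dyadic_rectangle_general x y xd yd hxd hyd q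
end
end
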